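/- arXiv:1812.02993 — 7 statements merged into one kernel-verified Lean document; each statement's English description precedes it below -/
import Mathlib

section
/- The dynamic mechanism induced by any bank account mechanism satisfying (IC), (BI), and (BU) is dynamic incentive compatible (DIC) and ex-post individually rational (eP-IR). -/
open Finset

namespace DynAuction

/-- A full matrix of (reported or true) values: one value per period and buyer. -/
abbrev Val (k T : ℕ) := Fin T → Fin k → ℝ

/-- A setting: finite nonnegative value spaces and full-support pmfs,
independent across buyers and periods. -/
structure Setting (k T : ℕ) where
  V : Fin k → Fin T → Finset ℝ
  V_nonempty : ∀ i t, (V i t).Nonempty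
  V_nonneg : ∀ i t, ∀ s ∈ V i t, (0 : ℝ) ≤ s
  f : Fin k → Fin T → ℝ → ℝ
  f_pos : ∀ i t, ∀ s ∈ V i t, 0 < f i t s
  f_sum : ∀ i t, ∑ s ∈ V i t, f i t s = 1

variable {k T : ℕ}

/-- A per-period map (allocation or payment) from report histories. -/
abbrev Mech (k T : ℕ) := Fin T → Val k T → Fin k → ℝ

/-- A per-period map depends only on the reports up to the given period. -/
def PrefixDep (m : Mech k T) : Prop :=
  ∀ (t : Fin T) (h h' : Val k T), (∀ τ : Fin T, τ ≤ t → h τ = h' τ) → m t h = m t h'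

def ValidSeq (S : Setting k T) (v : Val k T) : Prop := ∀ t i, v t i ∈ S.V i t

/-- The finite set of all (valid) value matrices. -/
noncomputable def allSeq (S : Setting k T) : Finset (Val k T) :=
  Fintype.piFinset fun t => Fintype.piFinset fun i => S.V i t

/-- Probability of a full value matrix (independence across buyers and periods). -/
noncomputable def seqProb (S : Setting k T) (v : Val k T) : ℝ :=
  ∏ t, ∏ i, S.f i t (v t i)

/-- The finite set of all value sequences of a single buyer. -/
noncomputable def buyerSeqs (S : Setting k T) (i : Fin k) : Finset (Fin T → ℝ) :=
  Fintype.piFinset fun t => S.V i t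

/-- Probability of a single buyer's value sequence. -/
noncomputable def buyerProb (S : Setting k T) (i : Fin k) (w : Fin T → ℝ) : ℝ :=
  ∏ t, S.f i t (w t)

/-- Period-`t` utility of buyer `i` with true value `vi` under report history `h`. -/
def util (x p : Mech k T) (i : Fin k) (t : Fin T) (vi : ℝ) (h : Val k T) : ℝ :=
  vi * x t h i - p t h i

/-- Replace buyer `i`'s report in period `t` by `r`. -/
def replace (vhat : Val k T) (i : Fin k) (t : Fin T) (r : ℝ) : Val k T :=
  fun τ j => if τ = t ∧ j = i then r else vhat τ j

/-- The report history where buyer `i` reports truthfully (values `w`) after period `t`,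
while everything else is as in `vhat`. -/
def blend (i : Fin k) (t : Fin T) (vhat : Val k T) (w : Fin T → ℝ) : Val k T :=
  fun τ j => if t < τ ∧ j = i then w τ else vhat τ j

/-- Continuation utility of buyer `i` after period `t`: expected utility from periods
`τ > t` assuming buyer `i` reports truthfully from period `t+1` on while the other
buyers' reports are as given in `vhat`. -/
noncomputable def contUtil (S : Setting k T) (x p : Mech k T) (i : Fin k) (t : Fin T)
    (vhat : Val k T) : ℝ :=
  ∑ w ∈ buyerSeqs S i, buyerProb S i w *
    ∑ τ ∈ univ.filter (fun τ : Fin T => t < τ), util x p i τ (w τ) (blend i t vhat w)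

/-- Dynamic incentive compatibility. -/
def DIC (S : Setting k T) (x p : Mech k T) : Prop :=
  ∀ vhat : Val k T, ValidSeq S vhat → ∀ (i : Fin k) (t : Fin T),
    ∀ vi ∈ S.V i t, ∀ r ∈ S.V i t,
      util x p i t vi (replace vhat i t r) + contUtil S x p i t (replace vhat i t r)
        ≤ util x p i t vi (replace vhat i t vi) + contUtil S x p i t (replace vhat i t vi)

/-- Ex-post individual rationality under truthful reporting. -/
def EPIR (S : Setting k T) (x p : Mech k T) : Prop :=
  ∀ v : Val k T, ValidSeq S v → ∀ i : Fin k, 0 ≤ ∑ t, util x p i t (v t i) v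

/-- Expected revenue under truthful reporting. -/
noncomputable def revenue (S : Setting k T) (p : Mech k T) : ℝ :=
  ∑ v ∈ allSeq S, seqProb S v * ∑ t, ∑ i, p t v i

/-- Expected welfare under truthful reporting. -/
noncomputable def welfare (S : Setting k T) (x : Mech k T) : ℝ :=
  ∑ v ∈ allSeq S, seqProb S v * ∑ t, ∑ i, v t i * x t v i

/-! ### Bank account mechanisms -/

/-- A per-period bank-account map: takes the current period's reports and a balance
vector, returns a vector (allocation, payment, or updated balances). -/
abbrev BankMap (k T : ℕ) := Fin T → (Fin k → ℝ) → (Fin k → ℝ) → Fin k → ℝ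

def NonnegBal (b : Fin k → ℝ) : Prop := ∀ i, 0 ≤ b i

def BValid (S : Setting k T) (t : Fin T) (v : Fin k → ℝ) : Prop := ∀ j, v j ∈ S.V j t

/-- Allocation bounds and feasibility for the per-period auctions. -/
def BankFeasible (S : Setting k T) (xB : BankMap k T) : Prop :=
  ∀ (t : Fin T) (v : Fin k → ℝ), BValid S t v → ∀ b : Fin k → ℝ, NonnegBal b →
    (∀ i, 0 ≤ xB t v b i ∧ xB t v b i ≤ 1) ∧ (∑ i, xB t v b i ≤ 1)

/-- (IC): each per-period auction is single-period incentive compatible for each balance. -/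
def BankIC (S : Setting k T) (xB pB : BankMap k T) : Prop :=
  ∀ (t : Fin T) (b : Fin k → ℝ), NonnegBal b → ∀ v : Fin k → ℝ, BValid S t v →
    ∀ (i : Fin k), ∀ r ∈ S.V i t,
      v i * xB t (Function.update v i r) b i - pB t (Function.update v i r) b i
        ≤ v i * xB t v b i - pB t v b i

/-- Expected stage utility of buyer `i` (expectation over buyer `i`'s own value). -/
noncomputable def stageEU (S : Setting k T) (xB pB : BankMap k T) (t : Fin T) (i : Fin k)
    (v : Fin k → ℝ) (b : Fin k → ℝ) : ℝ :=
  ∑ s ∈ S.V i t, S.f i t s *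
    (s * xB t (Function.update v i s) b i - pB t (Function.update v i s) b i)

/-- (BI): the expected stage utility is nonnegative and balance independent. -/
def BankBI (S : Setting k T) (xB pB : BankMap k T) : Prop :=
  ∀ (t : Fin T) (i : Fin k) (v : Fin k → ℝ), (∀ j, j ≠ i → v j ∈ S.V j t) →
    (∀ b b' : Fin k → ℝ, NonnegBal b → NonnegBal b' →
      stageEU S xB pB t i v b = stageEU S xB pB t i v b') ∧
    (∀ b : Fin k → ℝ, NonnegBal b → 0 ≤ stageEU S xB pB t i v b)

/-- (BU): balance update conditions. -/
def BankBU (S : Setting k T) (xB pB buB : BankMap k T) : Prop :=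
  ∀ (t : Fin T) (b : Fin k → ℝ), NonnegBal b → ∀ v : Fin k → ℝ, BValid S t v →
    ∀ i : Fin k,
      0 ≤ buB t v b i ∧ buB t v b i ≤ b i + v i * xB t v b i - pB t v b i

/-- Balances induced recursively by the balance update policy: `balAux n` is the
balance vector at the end of the first `n` periods (`balAux 0 = 0`). -/
noncomputable def balAux (buB : BankMap k T) (v : Val k T) : ℕ → Fin k → ℝ
  | 0 => fun _ => 0
  | n + 1 => if h : n < T then buB ⟨n, h⟩ (v ⟨n, h⟩) (balAux buB v n) else balAux buB v n

/-- The dynamic mechanism induced by a bank account mechanism. -/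
noncomputable def induced (mB buB : BankMap k T) : Mech k T :=
  fun t v => mB t (v t) (balAux buB v (t : ℕ))

/-! The current-period report only moves buyer `i`'s balance, and by (BI) the expected utility
of any later period, taken over that period's own value, is the same for every nonnegative
balance; hence the continuation utility does not depend on the report, and (IC) handles the
current period. For eP-IR, (BU) says the balance grows by at most the period's utility, so the
total utility telescopes to at least the final balance, which is nonnegative. -/

open Function

section Resampling

variable {ι β M : Type*} [Fintype ι] [DecidableEq ι] [AddCommMonoid M]

/-- `(w, s) ↦ (update w a s, w a)` is an involution of `piFinset V ×ˢ V a`. -/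
theorem sum_piFinset_sum_update_comm (V : ι → Finset β) (a : ι) (H : (ι → β) → β → M) :
    ∑ w ∈ Fintype.piFinset V, ∑ s ∈ V a, H (update w a s) (w a)
      = ∑ w ∈ Fintype.piFinset V, ∑ s ∈ V a, H w s := by
  rw [← sum_product' (f := fun w s => H (update w a s) (w a)), ← sum_product' (f := H)]
  have hmem : ∀ p ∈ Fintype.piFinset V ×ˢ V a,
      (update p.1 a p.2, p.1 a) ∈ Fintype.piFinset V ×ˢ V a := by
    rintro ⟨w, s⟩ hp
    simp only [mem_product, Fintype.mem_piFinset] at hp ⊢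
    refine ⟨fun b => ?_, hp.1 a⟩
    rcases eq_or_ne b a with rfl | hb
    · simpa using hp.2
    · simpa [hb] using hp.1 b
  exact sum_nbij' (fun p => (update p.1 a p.2, p.1 a)) (fun p => (update p.1 a p.2, p.1 a))
    hmem hmem (fun _ _ => by simp) (fun _ _ => by simp) (fun _ _ => rfl)

end Resampling

theorem sum_buyerProb (S : Setting k T) (i : Fin k) :
    ∑ w ∈ buyerSeqs S i, buyerProb S i w = 1 := by
  simp only [buyerSeqs, buyerProb]
  rw [← prod_univ_sum]
  simp [S.f_sum]

theorem buyerProb_update_mul (S : Setting k T) (i : Fin k) (τ : Fin T) (w : Fin T → ℝ)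
    (s : ℝ) : buyerProb S i (update w τ s) * S.f i τ (w τ) = S.f i τ s * buyerProb S i w := by
  simp only [buyerProb, ← Finset.mul_prod_erase univ _ (mem_univ τ), update_self]
  rw [prod_congr rfl fun σ hσ => by rw [update_of_ne (ne_of_mem_erase hσ)]]
  ring

/-- Resampling: if `g s w` ignores `w τ`, averaging `g (w τ) w` over buyer `i`'s value
sequences is the same as first averaging over a fresh draw `s` of period `τ`. -/
theorem sum_buyerProb_mul_eq_sum_resample (S : Setting k T) (i : Fin k) (τ : Fin T)
    (g : ℝ → (Fin T → ℝ) → ℝ) (hg : ∀ s a w, g s (update w τ a) = g s w) :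
    ∑ w ∈ buyerSeqs S i, buyerProb S i w * g (w τ) w
      = ∑ w ∈ buyerSeqs S i, buyerProb S i w * ∑ s ∈ S.V i τ, S.f i τ s * g s w := by
  calc ∑ w ∈ buyerSeqs S i, buyerProb S i w * g (w τ) w
      = ∑ w ∈ buyerSeqs S i, ∑ s ∈ S.V i τ, buyerProb S i w * S.f i τ s * g (w τ) w := by
        refine sum_congr rfl fun w _ => ?_
        rw [← sum_mul, ← mul_sum, S.f_sum, mul_one]
    _ = ∑ w ∈ buyerSeqs S i, ∑ s ∈ S.V i τ,
          buyerProb S i (update w τ s) * S.f i τ (w τ) * g s (update w τ s) := by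
        rw [buyerSeqs, ← sum_piFinset_sum_update_comm]
        simp
    _ = _ := by
        refine sum_congr rfl fun w _ => ?_
        simp only [buyerProb_update_mul, hg, mul_sum]
        exact sum_congr rfl fun s _ => by ring

section Histories

theorem replace_apply_self (vhat : Val k T) (i : Fin k) (t : Fin T) (r : ℝ) :
    replace vhat i t r t = update (vhat t) i r := by
  funext j
  by_cases hj : j = i <;> simp [replace, hj]

theorem replace_apply_of_ne {vhat : Val k T} {i : Fin k} {t τ : Fin T} (r : ℝ) (h : τ ≠ t) :
    replace vhat i t r τ = vhat τ := by
  funext j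
  simp [replace, h]

theorem blend_apply_of_lt {i : Fin k} {t τ : Fin T} (vhat : Val k T) (w : Fin T → ℝ)
    (h : t < τ) : blend i t vhat w τ = update (vhat τ) i (w τ) := by
  funext j
  by_cases hj : j = i <;> simp [blend, hj, h]

theorem blend_update_apply_of_ne {i : Fin k} {t τ σ : Fin T} (vhat : Val k T)
    (w : Fin T → ℝ) (a : ℝ) (h : σ ≠ τ) :
    blend i t vhat (update w τ a) σ = blend i t vhat w σ := by
  funext j
  simp [blend, update_of_ne h]

theorem ValidSeq.replace {S : Setting k T} {vhat : Val k T} (h : ValidSeq S vhat)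
    {i : Fin k} {t : Fin T} {r : ℝ} (hr : r ∈ S.V i t) : ValidSeq S (replace vhat i t r) := by
  intro τ j
  by_cases hτj : τ = t ∧ j = i
  · obtain ⟨rfl, rfl⟩ := hτj
    simpa [DynAuction.replace] using hr
  · simpa [DynAuction.replace, hτj] using h τ j

theorem ValidSeq.blend {S : Setting k T} {vhat : Val k T} (h : ValidSeq S vhat) {i : Fin k}
    (t : Fin T) {w : Fin T → ℝ} (hw : w ∈ buyerSeqs S i) : ValidSeq S (blend i t vhat w) := by
  rw [buyerSeqs, Fintype.mem_piFinset] at hw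
  intro τ j
  by_cases hτj : t < τ ∧ j = i
  · obtain ⟨htτ, rfl⟩ := hτj
    simpa [DynAuction.blend, htτ] using hw τ
  · simpa [DynAuction.blend, hτj] using h τ j

theorem BValid.update {S : Setting k T} {t : Fin T} {v : Fin k → ℝ} {i : Fin k}
    (hv : ∀ j, j ≠ i → v j ∈ S.V j t) {s : ℝ} (hs : s ∈ S.V i t) :
    BValid S t (update v i s) := by
  intro j
  rcases eq_or_ne j i with rfl | hj
  · simpa using hs
  · simpa [hj] using hv j hj

end Histories

section Balances

variable {buB : BankMap k T}

theorem balAux_congr {v v' : Val k T} {n : ℕ} (h : ∀ τ : Fin T, (τ : ℕ) < n → v τ = v' τ) :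
    balAux buB v n = balAux buB v' n := by
  induction n with
  | zero => rfl
  | succ n ih =>
    simp only [balAux]
    split_ifs with hn
    · rw [ih fun τ hτ => h τ (by omega), h ⟨n, hn⟩ (by simp)]
    · exact ih fun τ hτ => h τ (by omega)

theorem balAux_fin_succ (v : Val k T) (τ : Fin T) :
    balAux buB v (τ + 1) = buB τ (v τ) (balAux buB v τ) := by
  simp [balAux]

theorem balAux_nonneg {S : Setting k T} {xB pB : BankMap k T} (hBU : BankBU S xB pB buB)
    {v : Val k T} (hv : ValidSeq S v) (n : ℕ) : NonnegBal (balAux buB v n) := by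
  induction n with
  | zero => exact fun _ => le_rfl
  | succ n ih =>
    simp only [balAux]
    split_ifs with hn
    · exact fun j => (hBU ⟨n, hn⟩ _ ih _ (fun j' => hv _ j') j).1
    · exact ih

end Balances

section Induced

variable {S : Setting k T} {xB pB buB : BankMap k T}

theorem util_induced_replace (vhat : Val k T) (i : Fin k) (t : Fin T) (vi r : ℝ) :
    util (induced xB buB) (induced pB buB) i t vi (replace vhat i t r)
      = vi * xB t (update (vhat t) i r) (balAux buB vhat t) i
        - pB t (update (vhat t) i r) (balAux buB vhat t) i := by
  have hbal : balAux buB (replace vhat i t r) t = balAux buB vhat t :=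
    balAux_congr fun τ hτ => replace_apply_of_ne r (Fin.ne_of_lt hτ)
  simp only [util, induced, replace_apply_self, hbal]

theorem sum_buyerProb_mul_util_induced_blend (hBI : BankBI S xB pB) (hBU : BankBU S xB pB buB)
    {η : Val k T} (hη : ValidSeq S η) (i : Fin k) {t τ : Fin T} (htτ : t < τ) :
    ∑ w ∈ buyerSeqs S i, buyerProb S i w *
        util (induced xB buB) (induced pB buB) i τ (w τ) (blend i t η w)
      = stageEU S xB pB τ i (η τ) 0 := by
  set B : (Fin T → ℝ) → Fin k → ℝ := fun w => balAux buB (blend i t η w) τ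
  have hB : ∀ w a, B (update w τ a) = B w := fun w a =>
    balAux_congr fun σ hσ => blend_update_apply_of_ne η w a (Fin.ne_of_lt hσ)
  have hη_other : ∀ j, j ≠ i → η τ j ∈ S.V j τ := fun j _ => hη τ j
  calc ∑ w ∈ buyerSeqs S i, buyerProb S i w *
        util (induced xB buB) (induced pB buB) i τ (w τ) (blend i t η w)
      = ∑ w ∈ buyerSeqs S i, buyerProb S i w *
          (w τ * xB τ (update (η τ) i (w τ)) (B w) i - pB τ (update (η τ) i (w τ)) (B w) i) := by
        simp only [util, induced, blend_apply_of_lt η _ htτ, B]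
    _ = ∑ w ∈ buyerSeqs S i, buyerProb S i w * stageEU S xB pB τ i (η τ) (B w) :=
        sum_buyerProb_mul_eq_sum_resample S i τ
          (fun s w => s * xB τ (update (η τ) i s) (B w) i - pB τ (update (η τ) i s) (B w) i)
          fun s a w => by rw [hB]
    _ = ∑ w ∈ buyerSeqs S i, buyerProb S i w * stageEU S xB pB τ i (η τ) 0 := by
        refine sum_congr rfl fun w hw => ?_
        rw [(hBI τ i (η τ) hη_other).1 _ _ (balAux_nonneg hBU (hη.blend t hw) τ)
          fun _ => le_rfl]
        rfl
    _ = stageEU S xB pB τ i (η τ) 0 := by rw [← sum_mul, sum_buyerProb, one_mul]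

theorem contUtil_induced (hBI : BankBI S xB pB) (hBU : BankBU S xB pB buB) {η : Val k T}
    (hη : ValidSeq S η) (i : Fin k) (t : Fin T) :
    contUtil S (induced xB buB) (induced pB buB) i t η
      = ∑ τ ∈ univ.filter (fun τ : Fin T => t < τ), stageEU S xB pB τ i (η τ) 0 := by
  simp only [contUtil, mul_sum]
  rw [sum_comm]
  exact sum_congr rfl fun τ hτ =>
    sum_buyerProb_mul_util_induced_blend hBI hBU hη i (mem_filter.1 hτ).2

theorem dic_induced (hIC : BankIC S xB pB) (hBI : BankBI S xB pB) (hBU : BankBU S xB pB buB) :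
    DIC S (induced xB buB) (induced pB buB) := by
  intro vhat hvhat i t vi hvi r hr
  have hcont : contUtil S (induced xB buB) (induced pB buB) i t (replace vhat i t r)
      = contUtil S (induced xB buB) (induced pB buB) i t (replace vhat i t vi) := by
    rw [contUtil_induced hBI hBU (hvhat.replace hr), contUtil_induced hBI hBU (hvhat.replace hvi)]
    refine sum_congr rfl fun τ hτ => ?_
    have hτt : τ ≠ t := (Fin.ne_of_lt (mem_filter.1 hτ).2).symm
    rw [replace_apply_of_ne r hτt, replace_apply_of_ne vi hτt]
  have hstage := hIC t _ (balAux_nonneg hBU hvhat t) _ (BValid.update (fun j _ => hvhat t j) hvi)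
    i r hr
  simp only [update_idem, update_self] at hstage
  rw [util_induced_replace, util_induced_replace, hcont]
  linarith

theorem epir_induced (hBU : BankBU S xB pB buB) : EPIR S (induced xB buB) (induced pB buB) := by
  intro v hv i
  have hstep : ∀ τ : Fin T, balAux buB v (τ + 1) i - balAux buB v τ i
      ≤ util (induced xB buB) (induced pB buB) i τ (v τ i) v := fun τ => by
    have := (hBU τ _ (balAux_nonneg hBU hv τ) (v τ) (hv τ) i).2
    rw [balAux_fin_succ, util, induced, induced]
    linarith
  calc (0 : ℝ) ≤ balAux buB v T i := balAux_nonneg hBU hv T i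
    _ = ∑ τ : Fin T, (balAux buB v (τ + 1) i - balAux buB v τ i) := by
        rw [Fin.sum_univ_eq_sum_range (fun n => balAux buB v (n + 1) i - balAux buB v n i),
          sum_range_sub (fun n => balAux buB v n i)]
        simp [balAux]
    _ ≤ _ := sum_le_sum fun τ _ => hstep τ

end Induced

theorem induced_bank_account_mechanism_DIC_and_EPIR_general
    (k T : ℕ) (S : Setting k T)
    (xB pB buB : BankMap k T)
    (hIC : BankIC S xB pB) (hBI : BankBI S xB pB) (hBU : BankBU S xB pB buB) :
    DIC S (induced xB buB) (induced pB buB) ∧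
    EPIR S (induced xB buB) (induced pB buB) :=
  ⟨dic_induced hIC hBI hBU, epir_induced hBU⟩

/-- The dynamic mechanism induced by any bank account mechanism
satisfying (IC), (BI), and (BU) is dynamic incentive compatible (DIC) and
ex-post individually rational (eP-IR). -/
theorem induced_bank_account_mechanism_DIC_and_EPIR
    (k T : ℕ) (hk : 1 ≤ k) (hT : 1 ≤ T) (S : Setting k T)
    (xB pB buB : BankMap k T)
    (hfeas : BankFeasible S xB)
    (hIC : BankIC S xB pB) (hBI : BankBI S xB pB) (hBU : BankBU S xB pB buB) :
    DIC S (induced xB buB) (induced pB buB) ∧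
    EPIR S (induced xB buB) (induced pB buB) :=
  induced_bank_account_mechanism_DIC_and_EPIR_general k T S xB pB buB hIC hBI hBU

end DynAuction
end

section
/- If a dynamic mechanism is dynamic incentive compatible (DIC), then for every buyer i and every fixed profile of truthful reports by the other buyers, truthful reporting in every period maximizes buyer i's expected total utility E[Σ_{t=1}^T u_i^t] among all adaptive reporting strategies of buyer i, i.e., among all families of maps σ_i^t sending buyer i's observed history of past true values and past reports together with the current true value v_i^t to a report in V_i^t. -/
open Finset

namespace DynAuction

variable {k T : ℕ}

/-! ### Adaptive reporting strategies -/

/-- An adaptive reporting strategy for a single buyer: in each period `t` it maps the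
buyer's observed history of past true values, past reports, and the current true value
to a report. (Only the entries of the first two arguments at periods `< t` are ever
used.) -/
abbrev Strat (T : ℕ) := Fin T → (Fin T → ℝ) → (Fin T → ℝ) → ℝ → ℝ

/-- The report sequence of a buyer with true value sequence `w` playing strategy `σ`
(defined recursively: the report in period `n` may depend on the true values and
reports of periods `< n` and on the current true value `w n`). -/
noncomputable def reports {T : ℕ} (σ : Strat T) (w : Fin T → ℝ) (n : ℕ) : ℝ :=
  Nat.strongRecOn n (fun n ih =>
    if h : n < T then
      σ ⟨n, h⟩ (fun τ => if (τ : ℕ) < n then w τ else 0)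
        (fun τ => if h' : (τ : ℕ) < n then ih τ h' else 0) (w ⟨n, h⟩)
    else 0)

/-- The report matrix when buyer `i` has true values `w` and plays strategy `σ`, while
the other buyers truthfully report their fixed values `vo`. -/
noncomputable def stratHist {k T : ℕ} (i : Fin k) (vo : Val k T) (σ : Strat T)
    (w : Fin T → ℝ) : Val k T :=
  fun τ j => if j = i then reports σ w (τ : ℕ) else vo τ j

/-- The report matrix when buyer `i` truthfully reports `w` and the other buyers
truthfully report their fixed values `vo`. -/
def truthHist {k T : ℕ} (i : Fin k) (vo : Val k T) (w : Fin T → ℝ) : Val k T :=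
  fun τ j => if j = i then w τ else vo τ j

/-! Hybrid argument. Let `H m` be the report history in which buyer `i` follows `σ` before
period `m` and reports truthfully from period `m` on, so `H 0` is truth-telling and `H T` is `σ`.
`H m` and `H (m + 1)` differ only in the report of period `m`, and up to period `m` both depend
only on the true values up to `m`. As values are independent across periods, the expected
utility of the periods after `m` under either history is the expected continuation utility of
DIC at period `m`; so DIC at `m`, applied for each realisation of the values, gives
`EU (H (m + 1)) ≤ EU (H m)`, and chaining these `T` inequalities proves the theorem. -/

section Merge

variable {ι α : Type*} [Fintype ι] [DecidableEq ι] {V : ι → Finset α} {f : ι → α → ℝ}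

theorem piecewise_mem_piFinset (s : Finset ι) {w w' : ι → α}
    (hw : w ∈ Fintype.piFinset V) (hw' : w' ∈ Fintype.piFinset V) :
    s.piecewise w w' ∈ Fintype.piFinset V := by
  rw [Fintype.mem_piFinset] at *
  intro j
  by_cases hj : j ∈ s
  · simpa [hj] using hw j
  · simpa [hj] using hw' j

theorem prod_piecewise_mul_prod_piecewise (s : Finset ι) (w w' : ι → α) :
    (∏ j, f j (s.piecewise w w' j)) * ∏ j, f j (s.piecewise w' w j)
      = (∏ j, f j (w j)) * ∏ j, f j (w' j) := by
  rw [← prod_mul_distrib, ← prod_mul_distrib]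
  refine prod_congr rfl fun j _ => ?_
  by_cases hj : j ∈ s <;> simp [hj, mul_comm]

/-- Gluing the coordinates in `s` of one sample of a product distribution to the other
coordinates of an independent sample gives again a sample of that distribution. -/
theorem sum_piFinset_mul_sum_piFinset_mul_piecewise (hf : ∀ j, ∑ a ∈ V j, f j a = 1)
    (s : Finset ι) (G : (ι → α) → ℝ) :
    ∑ w ∈ Fintype.piFinset V, (∏ j, f j (w j)) *
        ∑ w' ∈ Fintype.piFinset V, (∏ j, f j (w' j)) * G (s.piecewise w w')
      = ∑ w ∈ Fintype.piFinset V, (∏ j, f j (w j)) * G w := by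
  set P : (ι → α) → ℝ := fun w => ∏ j, f j (w j)
  set Ω := Fintype.piFinset V
  have hP : ∑ w ∈ Ω, P w = 1 := by
    rw [← prod_univ_sum]
    exact prod_eq_one fun j _ => hf j
  -- the swap `(w, w') ↦ (s.piecewise w w', s.piecewise w' w)` is an involution preserving `P ⊗ P`
  let swap : (ι → α) × (ι → α) → (ι → α) × (ι → α) :=
    fun q => (s.piecewise q.1 q.2, s.piecewise q.2 q.1)
  have swap_mem : ∀ q ∈ Ω ×ˢ Ω, swap q ∈ Ω ×ˢ Ω := fun q hq => by
    rw [mem_product] at hq ⊢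
    exact ⟨piecewise_mem_piFinset s hq.1 hq.2, piecewise_mem_piFinset s hq.2 hq.1⟩
  have swap_swap : ∀ q, swap (swap q) = q := fun q => by simp [swap, piecewise_same]
  calc ∑ w ∈ Ω, P w * ∑ w' ∈ Ω, P w' * G (s.piecewise w w')
      = ∑ q ∈ Ω ×ˢ Ω, P q.1 * P q.2 * G (swap q).1 := by
        simp_rw [sum_product, mul_sum, mul_assoc]
        rfl
    _ = ∑ q ∈ Ω ×ˢ Ω, P q.1 * P q.2 * G q.1 :=
        sum_nbij' swap swap swap_mem swap_mem (fun q _ => swap_swap q) (fun q _ => swap_swap q)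
          fun q _ => by rw [← prod_piecewise_mul_prod_piecewise s q.1 q.2]
    _ = ∑ w ∈ Ω, P w * G w := by
        simp_rw [sum_product, mul_right_comm _ _ (G _), ← mul_sum, hP, mul_one]

end Merge

theorem reports_eq (σ : Strat T) (w : Fin T → ℝ) (n : ℕ) :
    reports σ w n =
      if h : n < T then
        σ ⟨n, h⟩ (fun τ => if (τ : ℕ) < n then w τ else 0)
          (fun τ => if (τ : ℕ) < n then reports σ w τ else 0) (w ⟨n, h⟩)
      else 0 := by
  rw [reports, Nat.strongRecOn_eq]
  simp only [dite_eq_ite]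
  rfl

theorem reports_congr (σ : Strat T) {w w' : Fin T → ℝ} (n : ℕ)
    (hw : ∀ τ : Fin T, (τ : ℕ) ≤ n → w τ = w' τ) :
    reports σ w n = reports σ w' n := by
  induction n using Nat.strong_induction_on with
  | _ n ih =>
    rw [reports_eq, reports_eq]
    split_ifs with hn
    · congr 1
      · funext τ
        split_ifs with hτ
        exacts [hw τ hτ.le, rfl]
      · funext τ
        split_ifs with hτ
        exacts [ih τ hτ fun τ' hτ' => hw τ' (hτ'.trans hτ.le), rfl]
      · exact hw _ le_rfl
    · rfl

theorem reports_mem {S : Setting k T} {i : Fin k} {σ : Strat T}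
    (hσ : ∀ (t : Fin T) (past rep : Fin T → ℝ), ∀ vi ∈ S.V i t, σ t past rep vi ∈ S.V i t)
    {w : Fin T → ℝ} (t : Fin T) (hwt : w t ∈ S.V i t) :
    reports σ w t ∈ S.V i t := by
  rw [reports_eq, dif_pos t.isLt]
  exact hσ t _ _ _ hwt

noncomputable def hybridHist (i : Fin k) (vo : Val k T) (σ : Strat T) (m : ℕ)
    (w : Fin T → ℝ) : Val k T :=
  fun τ j => if j = i then (if (τ : ℕ) < m then reports σ w τ else w τ) else vo τ j

section Hybrid

variable (i : Fin k) (vo : Val k T) (σ : Strat T)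

theorem hybridHist_zero : hybridHist i vo σ 0 = truthHist i vo := by
  funext w τ j
  simp [hybridHist, truthHist]

theorem hybridHist_of_le {m : ℕ} (hm : T ≤ m) : hybridHist i vo σ m = stratHist i vo σ := by
  funext w τ j
  simp [hybridHist, stratHist, τ.isLt.trans_le hm]

theorem hybridHist_succ_of_ne {m : ℕ} (w : Fin T → ℝ) {τ : Fin T} (hτ : (τ : ℕ) ≠ m) :
    hybridHist i vo σ (m + 1) w τ = hybridHist i vo σ m w τ := by
  have h : (τ : ℕ) < m + 1 ↔ (τ : ℕ) < m := by omega
  funext j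
  simp [hybridHist, h]

theorem replace_hybridHist_self {m : ℕ} (hm : m < T) (w : Fin T → ℝ) :
    replace (hybridHist i vo σ m w) i ⟨m, hm⟩ (w ⟨m, hm⟩) = hybridHist i vo σ m w := by
  funext τ j
  by_cases h : τ = ⟨m, hm⟩ ∧ j = i
  · obtain ⟨rfl, rfl⟩ := h
    simp [replace, hybridHist]
  · simp [replace, h]

theorem replace_hybridHist_reports {m : ℕ} (hm : m < T) (w : Fin T → ℝ) :
    replace (hybridHist i vo σ m w) i ⟨m, hm⟩ (reports σ w m) = hybridHist i vo σ (m + 1) w := by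
  funext τ j
  by_cases hτ : τ = ⟨m, hm⟩
  · subst hτ
    by_cases hj : j = i <;> simp [replace, hybridHist, hj]
  · have hτm : (τ : ℕ) ≠ m := fun h => hτ (Fin.ext h)
    rw [hybridHist_succ_of_ne i vo σ w hτm]
    simp [replace, hτ]

theorem validSeq_hybridHist {S : Setting k T} (hvo : ∀ t j, j ≠ i → vo t j ∈ S.V j t)
    (hσ : ∀ (t : Fin T) (past rep : Fin T → ℝ), ∀ vi ∈ S.V i t, σ t past rep vi ∈ S.V i t)
    (m : ℕ) {w : Fin T → ℝ} (hw : w ∈ buyerSeqs S i) :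
    ValidSeq S (hybridHist i vo σ m w) := by
  rw [buyerSeqs, Fintype.mem_piFinset] at hw
  intro τ j
  by_cases hj : j = i
  · subst hj
    by_cases hτ : (τ : ℕ) < m
    · simpa [hybridHist, hτ] using reports_mem hσ τ (hw τ)
    · simpa [hybridHist, hτ] using hw τ
  · simpa [hybridHist, hj] using hvo τ j hj

theorem blend_hybridHist {m : ℕ} {t : Fin T} (hm : m ≤ t + 1) (w w' : Fin T → ℝ) :
    blend i t (hybridHist i vo σ m w) w'
      = hybridHist i vo σ m ((Iic t).piecewise w w') := by
  funext τ j
  by_cases hj : j = i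
  · subst hj
    by_cases htτ : t < τ
    · have hτm : ¬ (τ : ℕ) < m := by have : (t : ℕ) < τ := htτ; omega
      simp [blend, hybridHist, htτ, hτm]
    · have hτt : τ ≤ t := not_lt.mp htτ
      have hpast : ∀ τ' : Fin T, (τ' : ℕ) ≤ τ → w τ' = (Iic t).piecewise w w' τ' :=
        fun τ' hτ' =>
          (piecewise_eq_of_mem _ _ _ (mem_Iic.mpr ((show τ' ≤ τ from hτ').trans hτt))).symm
      simp [blend, hybridHist, htτ, hpast τ le_rfl, reports_congr σ τ hpast]
  · simp [blend, hybridHist, hj]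

end Hybrid

theorem sum_eq_sum_filter_lt_add_add_sum_filter_gt {α M : Type*} [Fintype α] [LinearOrder α]
    [AddCommMonoid M] (g : α → M) (t : α) :
    ∑ τ, g τ = ∑ τ ∈ univ.filter (· < t), g τ + (g t + ∑ τ ∈ univ.filter (t < ·), g τ) := by
  have hge : univ.filter (fun τ => ¬ τ < t) = insert t (univ.filter (t < ·)) := by
    ext τ
    simp [le_iff_eq_or_lt, eq_comm]
  rw [← sum_filter_add_sum_filter_not univ (· < t), hge, sum_insert (by simp)]

noncomputable def expUtil (S : Setting k T) (x p : Mech k T) (i : Fin k)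
    (H : (Fin T → ℝ) → Val k T) : ℝ :=
  ∑ w ∈ buyerSeqs S i, buyerProb S i w * ∑ t, util x p i t (w t) (H w)

section ExpUtil

variable (S : Setting k T) (x p : Mech k T) (i : Fin k) (vo : Val k T) (σ : Strat T)

theorem sum_buyerProb_mul_contUtil_hybridHist {m : ℕ} {t : Fin T} (hm : m ≤ t + 1) :
    ∑ w ∈ buyerSeqs S i, buyerProb S i w * contUtil S x p i t (hybridHist i vo σ m w)
      = ∑ w ∈ buyerSeqs S i, buyerProb S i w *
          ∑ τ ∈ univ.filter (t < ·), util x p i τ (w τ) (hybridHist i vo σ m w) := by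
  set G : (Fin T → ℝ) → ℝ :=
    fun v => ∑ τ ∈ univ.filter (t < ·), util x p i τ (v τ) (hybridHist i vo σ m v)
  have hcont : ∀ w, contUtil S x p i t (hybridHist i vo σ m w)
      = ∑ w' ∈ buyerSeqs S i, buyerProb S i w' * G ((Iic t).piecewise w w') := fun w => by
    refine sum_congr rfl fun w' _ => congrArg _ (sum_congr rfl fun τ hτ => ?_)
    have hτt : τ ∉ Iic t := by simpa using (mem_filter.mp hτ).2
    rw [blend_hybridHist i vo σ hm, piecewise_eq_of_notMem _ _ _ hτt]
  simp_rw [hcont]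
  exact sum_piFinset_mul_sum_piFinset_mul_piecewise (S.f_sum i) (Iic t) G

/-- By independence across periods, the periods after `t` contribute the expected
continuation utility at `t`. -/
theorem expUtil_hybridHist_eq {m : ℕ} {t : Fin T} (hm : m ≤ t + 1) :
    expUtil S x p i (hybridHist i vo σ m)
      = ∑ w ∈ buyerSeqs S i, buyerProb S i w *
          (∑ τ ∈ univ.filter (· < t), util x p i τ (w τ) (hybridHist i vo σ m w)
            + (util x p i t (w t) (hybridHist i vo σ m w)
              + contUtil S x p i t (hybridHist i vo σ m w))) := by
  simp_rw [expUtil, sum_eq_sum_filter_lt_add_add_sum_filter_gt _ t, ← add_assoc, mul_add,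
    sum_add_distrib, sum_buyerProb_mul_contUtil_hybridHist S x p i vo σ hm]

theorem expUtil_hybridHist_succ_le (hxpre : PrefixDep x) (hppre : PrefixDep p)
    (hdic : DIC S x p) (hvo : ∀ t j, j ≠ i → vo t j ∈ S.V j t)
    (hσ : ∀ (t : Fin T) (past rep : Fin T → ℝ), ∀ vi ∈ S.V i t, σ t past rep vi ∈ S.V i t)
    (m : ℕ) :
    expUtil S x p i (hybridHist i vo σ (m + 1)) ≤ expUtil S x p i (hybridHist i vo σ m) := by
  obtain hm | hm := le_or_gt T m
  · rw [hybridHist_of_le i vo σ hm, hybridHist_of_le i vo σ (by omega)]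
  set t : Fin T := ⟨m, hm⟩
  rw [expUtil_hybridHist_eq S x p i vo σ (m := m + 1) (t := t) le_rfl,
    expUtil_hybridHist_eq S x p i vo σ (m := m) (t := t) (Nat.le_succ m)]
  refine sum_le_sum fun w hw => mul_le_mul_of_nonneg_left ?_ ?_
  · have hpast : ∀ τ ∈ univ.filter (· < t),
        util x p i τ (w τ) (hybridHist i vo σ (m + 1) w)
          = util x p i τ (w τ) (hybridHist i vo σ m w) := fun τ hτ => by
      have hagree : ∀ τ' ≤ τ, hybridHist i vo σ (m + 1) w τ' = hybridHist i vo σ m w τ' :=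
        fun τ' hτ' => hybridHist_succ_of_ne i vo σ w
          (ne_of_lt (lt_of_le_of_lt hτ' (mem_filter.mp hτ).2))
      simp only [util, hxpre τ _ _ hagree, hppre τ _ _ hagree]
    have hwt : w t ∈ S.V i t := (Fintype.mem_piFinset.mp hw) t
    have hdev := hdic _ (validSeq_hybridHist i vo σ hvo hσ m hw) i t (w t) hwt
      (reports σ w m) (reports_mem hσ t hwt)
    rw [replace_hybridHist_self, replace_hybridHist_reports] at hdev
    rw [sum_congr rfl hpast]
    exact add_le_add_right hdev _
  · exact prod_nonneg fun τ _ => (S.f_pos i τ _ ((Fintype.mem_piFinset.mp hw) τ)).le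

end ExpUtil

theorem DIC_implies_truthful_optimal_among_adaptive_strategies_general
    (k T : ℕ) (S : Setting k T)
    (x p : Mech k T)
    (hxpre : PrefixDep x) (hppre : PrefixDep p)
    (hdic : DIC S x p)
    (i : Fin k) (vo : Val k T) (hvo : ∀ (t : Fin T) (j : Fin k), j ≠ i → vo t j ∈ S.V j t)
    (σ : Strat T)
    (hσ : ∀ (t : Fin T) (past rep : Fin T → ℝ), ∀ vi ∈ S.V i t, σ t past rep vi ∈ S.V i t) :
    ∑ w ∈ buyerSeqs S i, buyerProb S i w *
        ∑ t, util x p i t (w t) (stratHist i vo σ w)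
      ≤ ∑ w ∈ buyerSeqs S i, buyerProb S i w *
          ∑ t, util x p i t (w t) (truthHist i vo w) := by
  have hanti : Antitone fun m => expUtil S x p i (hybridHist i vo σ m) :=
    antitone_nat_of_succ_le
      (expUtil_hybridHist_succ_le S x p i vo σ hxpre hppre hdic hvo hσ)
  have h := hanti (Nat.zero_le T)
  simp only [hybridHist_of_le i vo σ le_rfl, hybridHist_zero] at h
  exact h

/-- If a dynamic mechanism is DIC, then for every buyer `i` and every
fixed profile of truthful reports by the other buyers, truthful reporting maximizes
buyer `i`'s expected total utility among all adaptive reporting strategies. -/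
theorem DIC_implies_truthful_optimal_among_adaptive_strategies
    (k T : ℕ) (hk : 1 ≤ k) (hT : 1 ≤ T) (S : Setting k T)
    (x p : Mech k T)
    (hx01 : ∀ t v i, 0 ≤ x t v i ∧ x t v i ≤ 1)
    (hxfeas : ∀ t v, ∑ i, x t v i ≤ 1)
    (hxpre : PrefixDep x) (hppre : PrefixDep p)
    (hdic : DIC S x p)
    (i : Fin k) (vo : Val k T) (hvo : ∀ (t : Fin T) (j : Fin k), j ≠ i → vo t j ∈ S.V j t)
    (σ : Strat T)
    (hσ : ∀ (t : Fin T) (past rep : Fin T → ℝ), ∀ vi ∈ S.V i t, σ t past rep vi ∈ S.V i t) :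
    ∑ w ∈ buyerSeqs S i, buyerProb S i w *
        ∑ t, util x p i t (w t) (stratHist i vo σ w)
      ≤ ∑ w ∈ buyerSeqs S i, buyerProb S i w *
          ∑ t, util x p i t (w t) (truthHist i vo w) :=
  DIC_implies_truthful_optimal_among_adaptive_strategies_general k T S x p hxpre hppre hdic i vo hvo
    σ hσ

end DynAuction
end

section
/- For every g : ℝ^k → ℝ that is weakly increasing with respect to the coordinatewise partial order and every family ξ = (ξ_i)_i with ξ_i : V_{-i} → ℝ≥0, the map b ↦ G(g, b, ξ) is weakly increasing on (ℝ≥0)^k: if b ≤ b' coordinatewise then G(g, b, ξ) ≤ G(g, b', ξ). -/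
open Finset

namespace SinglePeriod

/-- A single-period setting with `k` buyers: finite nonnegative value spaces and
full-support probability mass functions, independent across buyers. -/
structure Setting (k : ℕ) where
  V : Fin k → Finset ℝ
  V_nonempty : ∀ i, (V i).Nonempty
  V_nonneg : ∀ i, ∀ s ∈ V i, (0 : ℝ) ≤ s
  f : Fin k → ℝ → ℝ
  f_pos : ∀ i, ∀ s ∈ V i, 0 < f i s
  f_sum : ∀ i, ∑ s ∈ V i, f i s = 1

variable {k : ℕ}

/-- The finite set of all (valid) value profiles. -/
noncomputable def profiles (S : Setting k) : Finset (Fin k → ℝ) :=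
  Fintype.piFinset fun i => S.V i

/-- Probability of a value profile (independent coordinates). -/
noncomputable def prob (S : Setting k) (v : Fin k → ℝ) : ℝ := ∏ i, S.f i (v i)

/-- The largest element of `V i` strictly below `s`, or `0` if none exists. -/
noncomputable def predV (S : Setting k) (i : Fin k) (s : ℝ) : ℝ :=
  WithBot.unbotD 0 (((S.V i).filter fun s' => s' < s).max)

/-- An allocation rule. -/
abbrev Alloc (k : ℕ) := (Fin k → ℝ) → Fin k → ℝ

/-- A family `ξ = (ξ_i)_i` of per-buyer expected utilities; `ξ i v` is required to
depend only on `v_{-i}` (see `ValidXi`). -/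
abbrev Util (k : ℕ) := Fin k → (Fin k → ℝ) → ℝ

/-- `ξ` is a valid family: nonnegative and `ξ i` depends only on the coordinates
other than `i`. -/
def ValidXi (S : Setting k) (ξ : Util k) : Prop :=
  (∀ i v, 0 ≤ ξ i v) ∧
  (∀ (i : Fin k) (v : Fin k → ℝ) (s : ℝ), ξ i (Function.update v i s) = ξ i v)

/-- Envelope utility `u'_i(v) = Σ_{s ∈ V_i, s ≤ v_i} x_i(s, v_{-i}) (s - pred s)`. -/
noncomputable def envU (S : Setting k) (x : Alloc k) (i : Fin k) (v : Fin k → ℝ) : ℝ :=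
  ∑ s ∈ (S.V i).filter (fun s => s ≤ v i), x (Function.update v i s) i * (s - predV S i s)

/-- `ū'_i(v_{-i}) = E_{v_i}[u'_i(v)]`. -/
noncomputable def envUbar (S : Setting k) (x : Alloc k) (i : Fin k) (v : Fin k → ℝ) : ℝ :=
  ∑ s ∈ S.V i, S.f i s * envU S x i (Function.update v i s)

/-- Balance increment `Δb_i(v) = u'_i(v) - ū'_i(v_{-i}) + ξ_i(v_{-i})`. -/
noncomputable def deltaB (S : Setting k) (x : Alloc k) (ξ : Util k)
    (v : Fin k → ℝ) (i : Fin k) : ℝ :=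
  envU S x i v - envUbar S x i v + ξ i v

/-- The objective of the single-period program `P(g, b, ξ)` at allocation `x`. -/
noncomputable def obj (S : Setting k) (g : (Fin k → ℝ) → ℝ) (b : Fin k → ℝ)
    (ξ : Util k) (x : Alloc k) : ℝ :=
  ∑ v ∈ profiles S, prob S v *
    ((∑ i, (v i * x v i - ξ i v)) + g (fun i => deltaB S x ξ v i + b i))

/-- Feasibility for the single-period program `P(g, b, ξ)`: allocation bounds,
feasibility, monotonicity, and the balance constraint. -/
def Feasible (S : Setting k) (b : Fin k → ℝ) (ξ : Util k) (x : Alloc k) : Prop :=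
  (∀ v ∈ profiles S, ∀ i, 0 ≤ x v i ∧ x v i ≤ 1) ∧
  (∀ v ∈ profiles S, ∑ i, x v i ≤ 1) ∧
  (∀ (i : Fin k), ∀ v ∈ profiles S, ∀ s ∈ S.V i, ∀ s' ∈ S.V i, s ≤ s' →
    x (Function.update v i s) i ≤ x (Function.update v i s') i) ∧
  (∀ (i : Fin k), ∀ v ∈ profiles S, envUbar S x i v ≤ b i + ξ i v)

/-- `G(g, b, ξ)`: the optimal value (supremum) of the program `P(g, b, ξ)`. -/
noncomputable def G (S : Setting k) (g : (Fin k → ℝ) → ℝ) (b : Fin k → ℝ)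
    (ξ : Util k) : ℝ :=
  sSup {r : ℝ | ∃ x : Alloc k, Feasible S b ξ x ∧ r = obj S g b ξ x}

/-!
Raising the balance vector `b` only relaxes the balance constraint and, `g` being monotone, only
raises the objective; so every allocation feasible for `b` is feasible for `b'` with at least the
same value. Since `sSup` of an empty or unbounded set is junk, one also needs that the zero
allocation is feasible for `b` and that the objectives for `b'` are bounded above, which holds
because `u'_i ≤ Σ_s (s - pred s)` and `ū'_i ≥ 0`.
-/

variable {S : Setting k}

lemma update_mem_profiles {v : Fin k → ℝ} (hv : v ∈ profiles S) {i : Fin k} {s : ℝ}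
    (hs : s ∈ S.V i) : Function.update v i s ∈ profiles S := by
  rw [profiles, Fintype.mem_piFinset] at hv ⊢
  intro j
  rcases eq_or_ne j i with rfl | hji
  · simpa using hs
  · simpa [Function.update_of_ne hji] using hv j

lemma predV_le {i : Fin k} {s : ℝ} (hs : s ∈ S.V i) : predV S i s ≤ s := by
  unfold predV
  rcases h : ((S.V i).filter fun s' => s' < s).max with _ | a
  · exact S.V_nonneg i s hs
  · exact (mem_filter.mp (mem_of_max h)).2.le

lemma prob_nonneg {v : Fin k → ℝ} (hv : v ∈ profiles S) : 0 ≤ prob S v :=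
  prod_nonneg fun i _ => (S.f_pos i (v i) (Fintype.mem_piFinset.mp hv i)).le

section Envelope

variable {x : Alloc k} (hx : ∀ v ∈ profiles S, ∀ i, 0 ≤ x v i ∧ x v i ≤ 1)
  {i : Fin k} {v : Fin k → ℝ}
include hx

lemma envU_nonneg (hv : v ∈ profiles S) : 0 ≤ envU S x i v := by
  refine sum_nonneg fun s hs => ?_
  have hsV := (mem_filter.mp hs).1
  exact mul_nonneg (hx _ (update_mem_profiles hv hsV) i).1 (sub_nonneg.mpr (predV_le hsV))

lemma envU_le_sum (hv : v ∈ profiles S) :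
    envU S x i v ≤ ∑ s ∈ S.V i, (s - predV S i s) := by
  have hstep : ∀ s ∈ S.V i, 0 ≤ s - predV S i s := fun s hs => sub_nonneg.mpr (predV_le hs)
  calc envU S x i v
      ≤ ∑ s ∈ (S.V i).filter (fun s => s ≤ v i), (s - predV S i s) := by
        refine sum_le_sum fun s hs => ?_
        have hsV := (mem_filter.mp hs).1
        exact mul_le_of_le_one_left (hstep s hsV) (hx _ (update_mem_profiles hv hsV) i).2
    _ ≤ ∑ s ∈ S.V i, (s - predV S i s) :=
        sum_le_sum_of_subset_of_nonneg (filter_subset _ _) fun s hs _ => hstep s hs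

lemma envUbar_nonneg (hv : v ∈ profiles S) : 0 ≤ envUbar S x i v :=
  sum_nonneg fun s hs =>
    mul_nonneg (S.f_pos i s hs).le (envU_nonneg hx (update_mem_profiles hv hs))

lemma deltaB_le (ξ : Util k) (hv : v ∈ profiles S) :
    deltaB S x ξ v i ≤ ∑ s ∈ S.V i, (s - predV S i s) + ξ i v := by
  have hU := envU_le_sum (i := i) hx hv
  have hUbar := envUbar_nonneg (i := i) hx hv
  unfold deltaB
  linarith

end Envelope

lemma Feasible.mono {b b' : Fin k → ℝ} {ξ : Util k} {x : Alloc k} (hx : Feasible S b ξ x)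
    (hbb' : b ≤ b') : Feasible S b' ξ x :=
  ⟨hx.1, hx.2.1, hx.2.2.1, fun i v hv => (hx.2.2.2 i v hv).trans (by linarith [hbb' i])⟩

lemma feasible_zero {b : Fin k → ℝ} {ξ : Util k} (hbξ : ∀ i v, 0 ≤ b i + ξ i v) :
    Feasible S b ξ 0 := by
  refine ⟨fun _ _ _ => by simp, fun _ _ => by simp, fun _ _ _ _ _ _ _ _ => le_rfl, ?_⟩
  intro i v _
  simpa [envUbar, envU] using hbξ i v

lemma obj_mono {g : (Fin k → ℝ) → ℝ} (hg : Monotone g) {b b' : Fin k → ℝ} (hbb' : b ≤ b')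
    (ξ : Util k) (x : Alloc k) : obj S g b ξ x ≤ obj S g b' ξ x :=
  sum_le_sum fun _ hv => mul_le_mul_of_nonneg_left
    (add_le_add_right (hg fun i => add_le_add_right (hbb' i) _) _) (prob_nonneg hv)

def feasibleValues (S : Setting k) (g : (Fin k → ℝ) → ℝ) (b : Fin k → ℝ) (ξ : Util k) :
    Set ℝ :=
  {r : ℝ | ∃ x : Alloc k, Feasible S b ξ x ∧ r = obj S g b ξ x}

lemma obj_le_of_feasible {g : (Fin k → ℝ) → ℝ} (hg : Monotone g) {b : Fin k → ℝ} {ξ : Util k}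
    {x : Alloc k} (hx : Feasible S b ξ x) :
    obj S g b ξ x ≤ ∑ v ∈ profiles S, prob S v * ((∑ i, (v i - ξ i v)) +
      g fun i => ∑ s ∈ S.V i, (s - predV S i s) + ξ i v + b i) := by
  refine sum_le_sum fun v hv => mul_le_mul_of_nonneg_left (add_le_add ?_ ?_) (prob_nonneg hv)
  · refine sum_le_sum fun i _ => sub_le_sub_right ?_ _
    exact mul_le_of_le_one_right (S.V_nonneg i (v i) (Fintype.mem_piFinset.mp hv i))
      (hx.1 v hv i).2
  · exact hg fun i => add_le_add_left (deltaB_le hx.1 ξ hv) _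

lemma bddAbove_feasibleValues {g : (Fin k → ℝ) → ℝ} (hg : Monotone g) (b : Fin k → ℝ)
    (ξ : Util k) : BddAbove (feasibleValues S g b ξ) :=
  ⟨_, fun _ ⟨_, hx, hr⟩ => hr ▸ obj_le_of_feasible hg hx⟩

theorem G_monotone_in_balance_general
    (k : ℕ) (S : Setting k)
    (g : (Fin k → ℝ) → ℝ) (hg : Monotone g)
    (ξ : Util k) (hξ : ValidXi S ξ)
    (b b' : Fin k → ℝ) (hb : ∀ i, 0 ≤ b i)
    (hbb' : b ≤ b') :
    G S g b ξ ≤ G S g b' ξ := by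
  have hzero : Feasible S b ξ 0 := feasible_zero fun i v => add_nonneg (hb i) (hξ.1 i v)
  refine csSup_le ⟨_, 0, hzero, rfl⟩ ?_
  rintro _ ⟨x, hx, rfl⟩
  exact le_csSup_of_le (bddAbove_feasibleValues hg b' ξ) ⟨x, hx.mono hbb', rfl⟩
    (obj_mono hg hbb' ξ x)

/-- For every weakly increasing `g : ℝ^k → ℝ` (coordinatewise order)
and valid family `ξ`, the optimal value `b ↦ G(g, b, ξ)` is weakly increasing on
`(ℝ≥0)^k`. -/
theorem G_monotone_in_balance
    (k : ℕ) (hk : 1 ≤ k) (S : Setting k)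
    (g : (Fin k → ℝ) → ℝ) (hg : Monotone g)
    (ξ : Util k) (hξ : ValidXi S ξ)
    (b b' : Fin k → ℝ) (hb : ∀ i, 0 ≤ b i) (hb' : ∀ i, 0 ≤ b' i)
    (hbb' : b ≤ b') :
    G S g b ξ ≤ G S g b' ξ :=
  G_monotone_in_balance_general k S g hg ξ hξ b b' hb hbb'

end SinglePeriod
end

section
/- Let K ⊆ ℝ^k be a nonempty compact convex set, g : K → ℝ a concave continuous function, and ε > 0. Then there exist two functions ĝ, ḡ : K → ℝ, each equal to the pointwise minimum of a nonempty finite family of affine functions on ℝ^k (hence each concave and piecewise linear), such that ĝ(b) ≤ g(b) ≤ ḡ(b) ≤ ĝ(b) + ε for all b ∈ K. -/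
/-!
Separating the point `(x, g x + ε)` from the closed convex hypograph of `g` yields an affine
majorant of `g` on `K` that stays below `g + ε` on a relative neighbourhood of `x`. By compactness
finitely many of these suffice; their minimum `ḡ` satisfies `g ≤ ḡ ≤ g + ε` on `K`, and
`ĝ := ḡ - ε` completes the sandwich.
-/

theorem ConcaveOn.exists_affine_ge_lt {E : Type*} [TopologicalSpace E] [AddCommGroup E]
    [Module ℝ E] [IsTopologicalAddGroup E] [ContinuousSMul ℝ E] [LocallyConvexSpace ℝ E]
    {s : Set E} {g : E → ℝ} (hg : ConcaveOn ℝ s g) (hgc : ContinuousOn g s) (hs : IsClosed s)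
    {x : E} (hx : x ∈ s) {r : ℝ} (hr : g x < r) :
    ∃ (φ : StrongDual ℝ E) (c : ℝ), (∀ y ∈ s, g y ≤ φ y + c) ∧ φ x + c < r := by
  have hclosed : IsClosed {p : E × ℝ | p.1 ∈ s ∧ p.2 ≤ g p.1} :=
    (upperSemicontinuousOn_iff_isClosed_hypograph hs).1 hgc.upperSemicontinuousOn
  obtain ⟨f, u, hf_lt, hu_lt⟩ := geometric_hahn_banach_closed_point hg.convex_hypograph hclosed
    (x := (x, r)) fun h ↦ hr.not_ge h.2
  set φ := f.comp (ContinuousLinearMap.inl ℝ E ℝ)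
  set a := f (0, 1)
  have hf : ∀ y t, f (y, t) = φ y + t * a := fun y t ↦ by
    rw [← smul_eq_mul, ← map_smul, ← ContinuousLinearMap.comp_inl_add_comp_inr f (y, t)]
    simp [φ]
  have hgraph : ∀ y ∈ s, φ y + g y * a < u := fun y hy ↦ hf y (g y) ▸ hf_lt _ ⟨hy, le_rfl⟩
  have hu_lt' : u < φ x + r * a := hf x r ▸ hu_lt
  -- `(x, g x)` lies in the hypograph and `(x, r)` above it, so `f` increases vertically.
  have ha : 0 < a := by nlinarith [hgraph x hx]
  have haffine : ∀ y, (-(a⁻¹ • φ)) y + u / a = (u - φ y) / a := fun y ↦ by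
    simp only [neg_apply, smul_apply, smul_eq_mul]
    field_simp
    ring
  refine ⟨-(a⁻¹ • φ), u / a, fun y hy ↦ ?_, ?_⟩
  · rw [haffine, le_div_iff₀ ha]
    linarith [hgraph y hy]
  · rw [haffine, div_lt_iff₀ ha]
    linarith

open Topology in
theorem ConcaveOn.exists_ciInf_affine_approx {E : Type*} [TopologicalSpace E] [AddCommGroup E]
    [Module ℝ E] [IsTopologicalAddGroup E] [ContinuousSMul ℝ E] [LocallyConvexSpace ℝ E]
    [T2Space E] {s : Set E} {g : E → ℝ} (hg : ConcaveOn ℝ s g) (hgc : ContinuousOn g s)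
    (hs : IsCompact s) (hne : s.Nonempty) {ε : ℝ} (hε : 0 < ε) :
    ∃ m, 0 < m ∧ ∃ (φ : Fin m → StrongDual ℝ E) (c : Fin m → ℝ), ∀ y ∈ s,
      g y ≤ ⨅ j, φ j y + c j ∧ ⨅ j, φ j y + c j ≤ g y + ε := by
  choose! φ c hφ_ge hφ_lt using fun x (hx : x ∈ s) ↦
    hg.exists_affine_ge_lt hgc hs.isClosed hx (lt_add_of_pos_right (g x) hε)
  have hnhds : ∀ x ∈ s, {y | φ x y + c x < g y + ε} ∈ 𝓝[s] x := fun x hx ↦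
    Filter.Tendsto.eventually_lt ((φ x).continuous.continuousWithinAt.add continuousWithinAt_const)
      ((hgc x hx).add continuousWithinAt_const) (hφ_lt x hx)
  obtain ⟨t, hts, hcover⟩ := hs.elim_nhdsWithin_subcover _ hnhds
  have ht : t.Nonempty := by
    obtain ⟨x₀, hx₀⟩ := hne
    obtain ⟨x, hxt, -⟩ := Set.mem_iUnion₂.1 (hcover hx₀)
    exact ⟨x, hxt⟩
  have : Nonempty (Fin t.card) := ⟨⟨0, ht.card_pos⟩⟩
  let e := t.equivFin.symm
  refine ⟨t.card, ht.card_pos, fun j ↦ φ (e j), fun j ↦ c (e j), fun y hy ↦ ⟨?_, ?_⟩⟩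
  · exact le_ciInf fun j ↦ hφ_ge _ (hts _ (e j).2) y hy
  · obtain ⟨x, hxt, hxy⟩ := Set.mem_iUnion₂.1 (hcover hy)
    refine ciInf_le_of_le (Set.finite_range _).bddBelow (e.symm ⟨x, hxt⟩) ?_
    simpa using hxy.le

theorem LinearMap.apply_eq_sum_apply_single_mul {R ι : Type*} [CommSemiring R] [Fintype ι]
    [DecidableEq ι] (f : (ι → R) →ₗ[R] R) (y : ι → R) :
    f y = ∑ i, f (Pi.single i 1) * y i := by
  conv_lhs => rw [pi_eq_sum_univ' y, map_sum]
  simp only [map_smul, smul_eq_mul, mul_comm]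

theorem concave_approx_by_min_of_affine_general
    (k : ℕ) (K : Set (Fin k → ℝ)) (hKne : K.Nonempty) (hKcpt : IsCompact K)
    (g : (Fin k → ℝ) → ℝ) (hgconc : ConcaveOn ℝ K g) (hgcont : ContinuousOn g K)
    (ε : ℝ) (hε : 0 < ε) :
    ∃ (n m : ℕ), 0 < n ∧ 0 < m ∧
      ∃ (α : Fin n → Fin k → ℝ) (β : Fin n → ℝ)
        (γ : Fin m → Fin k → ℝ) (δ : Fin m → ℝ),
        ∀ b ∈ K,
          (⨅ j : Fin n, (∑ i, α j i * b i + β j)) ≤ g b ∧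
          g b ≤ (⨅ j : Fin m, (∑ i, γ j i * b i + δ j)) ∧
          (⨅ j : Fin m, (∑ i, γ j i * b i + δ j))
            ≤ (⨅ j : Fin n, (∑ i, α j i * b i + β j)) + ε := by
  obtain ⟨m, hm, φ, c, happrox⟩ := hgconc.exists_ciInf_affine_approx hgcont hKcpt hKne hε
  have : Nonempty (Fin m) := ⟨⟨0, hm⟩⟩
  let γ : Fin m → Fin k → ℝ := fun j i ↦ φ j (Pi.single i 1)
  have hγ : ∀ j b, ∑ i, γ j i * b i = φ j b := fun j b ↦
    ((φ j : (Fin k → ℝ) →ₗ[ℝ] ℝ).apply_eq_sum_apply_single_mul b).symm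
  refine ⟨m, m, hm, hm, γ, fun j ↦ c j - ε, γ, c, fun b hb ↦ ?_⟩
  have hshift : ⨅ j, (∑ i, γ j i * b i + (c j - ε)) = (⨅ j, φ j b + c j) - ε := by
    simp_rw [← add_sub_assoc, hγ, sub_eq_add_neg]
    exact ((OrderIso.addRight (-ε)).map_ciInf (Set.finite_range _).bddBelow).symm
  rw [hshift]
  simp only [hγ]
  obtain ⟨hle, hge⟩ := happrox b hb
  exact ⟨by linarith, hle, by linarith⟩

/-- Every concave continuous function `g` on a nonempty compact convex
set `K ⊆ ℝ^k` can be `ε`-sandwiched between two functions, each the pointwise minimum of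
a nonempty finite family of affine functions `b ↦ α·b + β` on `ℝ^k`:
`ĝ(b) ≤ g(b) ≤ ḡ(b) ≤ ĝ(b) + ε` for all `b ∈ K`. -/
theorem concave_approx_by_min_of_affine
    (k : ℕ) (K : Set (Fin k → ℝ)) (hKne : K.Nonempty) (hKcpt : IsCompact K)
    (hKconv : Convex ℝ K)
    (g : (Fin k → ℝ) → ℝ) (hgconc : ConcaveOn ℝ K g) (hgcont : ContinuousOn g K)
    (ε : ℝ) (hε : 0 < ε) :
    ∃ (n m : ℕ), 0 < n ∧ 0 < m ∧
      ∃ (α : Fin n → Fin k → ℝ) (β : Fin n → ℝ)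
        (γ : Fin m → Fin k → ℝ) (δ : Fin m → ℝ),
        ∀ b ∈ K,
          (⨅ j : Fin n, (∑ i, α j i * b i + β j)) ≤ g b ∧
          g b ≤ (⨅ j : Fin m, (∑ i, γ j i * b i + δ j)) ∧
          (⨅ j : Fin m, (∑ i, γ j i * b i + δ j))
            ≤ (⨅ j : Fin n, (∑ i, α j i * b i + β j)) + ε :=
  concave_approx_by_min_of_affine_general k K hKne hKcpt g hgconc hgcont ε hε
end

section
/- Consider a single-period, single-item auction with k buyers: allocation rules x_i : V → [0,1] and payment rules p_i : V → ℝ for each i. Call it incentive compatible (IC) if for every buyer i, every value profile v ∈ V, and every deviation v̂_i ∈ V_i: v_i·x_i(v) − p_i(v) ≥ v_i·x_i(v̂_i, v_{-i}) − p_i(v̂_i, v_{-i}). Then: (a) if (x, p) is IC, then for every i and every v_{-i}, the map v_i ↦ x_i(v_i, v_{-i}) is nondecreasing on V_i; (b) conversely, if for every i and every v_{-i} the map v_i ↦ x_i(v_i, v_{-i}) is nondecreasing on V_i, then there exists a payment rule p = (p_1,…,p_k) such that (x, p) is IC. -/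
open Finset

namespace StaticAuction

/-- The finite set of all valid value profiles. -/
noncomputable def profiles {k : ℕ} (V : Fin k → Finset ℝ) : Finset (Fin k → ℝ) :=
  Fintype.piFinset fun i => V i

/-- Incentive compatibility of a single-period, single-item auction `(x, p)`:
no buyer can gain by misreporting, for any value profile. -/
def IC {k : ℕ} (V : Fin k → Finset ℝ)
    (x p : (Fin k → ℝ) → Fin k → ℝ) : Prop :=
  ∀ v ∈ profiles V, ∀ (i : Fin k), ∀ r ∈ V i,
    v i * x (Function.update v i r) i - p (Function.update v i r) i
      ≤ v i * x v i - p v i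

/-- Monotonicity of the allocation rule: for each buyer `i` and each profile of the
other buyers' values, the allocation to `i` is nondecreasing in `i`'s own value. -/
def MonotoneAlloc {k : ℕ} (V : Fin k → Finset ℝ)
    (x : (Fin k → ℝ) → Fin k → ℝ) : Prop :=
  ∀ (i : Fin k), ∀ v ∈ profiles V, ∀ s ∈ V i, ∀ s' ∈ V i, s ≤ s' →
    x (Function.update v i s) i ≤ x (Function.update v i s') i

/-- Auxiliary: `n`-th element of a list (default `0`). -/
noncomputable def Lfun (l : List ℝ) (n : ℕ) : ℝ := l.getD n 0

/-- Auxiliary: discrete "Myerson integral" of `g` along the first `n` points of `l`. -/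
noncomputable def Ffun (g : ℝ → ℝ) (l : List ℝ) (n : ℕ) : ℝ :=
  ∑ m ∈ Finset.range n, (Lfun l (m + 1) - Lfun l m) * g (Lfun l m)

lemma exists_convex_support (S : Finset ℝ) (g : ℝ → ℝ)
    (hg : ∀ s ∈ S, ∀ s' ∈ S, s ≤ s' → g s ≤ g s') :
    ∃ u : ℝ → ℝ, ∀ r ∈ S, ∀ s ∈ S, u r + (s - r) * g r ≤ u s := by
  classical
  set l := S.sort (· ≤ ·) with hl
  have hsort : l.Pairwise (· ≤ ·) := S.pairwise_sort _
  have hLmem : ∀ {n : ℕ}, n < l.length → Lfun l n ∈ S := by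
    intro n hn
    have h1 : Lfun l n = l[n] := List.getD_eq_getElem l 0 hn
    rw [h1, ← Finset.mem_sort (α := ℝ) (· ≤ ·)]
    exact List.getElem_mem _
  have hLmono : ∀ {a b : ℕ}, a ≤ b → b < l.length → Lfun l a ≤ Lfun l b := by
    intro a b hab hb
    have ha : a < l.length := lt_of_le_of_lt hab hb
    have h := hsort.rel_get_of_le (a := ⟨a, ha⟩) (b := ⟨b, hb⟩) hab
    rw [Lfun, Lfun, List.getD_eq_getElem l 0 ha, List.getD_eq_getElem l 0 hb]
    simpa [List.get_eq_getElem] using h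
  have htel : ∀ c d : ℕ, c ≤ d →
      ∑ m ∈ Finset.Ico c d, (Lfun l (m + 1) - Lfun l m) = Lfun l d - Lfun l c := by
    intro c d hcd
    rw [Finset.sum_Ico_eq_sub _ hcd, Finset.sum_range_sub, Finset.sum_range_sub]
    ring
  have key : ∀ a b : ℕ, a < l.length → b < l.length →
      Ffun g l a + (Lfun l b - Lfun l a) * g (Lfun l a) ≤ Ffun g l b := by
    intro a b ha hb
    rcases le_or_gt a b with hab | hba
    · have hdiff : ∑ m ∈ Finset.Ico a b, (Lfun l (m + 1) - Lfun l m) * g (Lfun l m)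
          = Ffun g l b - Ffun g l a := by
        rw [Ffun, Ffun, Finset.sum_Ico_eq_sub _ hab]
      have hbound : ∑ m ∈ Finset.Ico a b, (Lfun l (m + 1) - Lfun l m) * g (Lfun l a)
          ≤ ∑ m ∈ Finset.Ico a b, (Lfun l (m + 1) - Lfun l m) * g (Lfun l m) := by
        apply Finset.sum_le_sum
        intro m hm
        rw [Finset.mem_Ico] at hm
        have hm1 : m + 1 ≤ b := hm.2
        have hm1' : m + 1 < l.length := lt_of_le_of_lt hm1 hb
        have hmlt : m < l.length := lt_of_lt_of_le (Nat.lt_succ_self m) (le_of_lt hm1')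
        have hnn : 0 ≤ Lfun l (m + 1) - Lfun l m :=
          sub_nonneg.2 (hLmono (Nat.le_succ m) hm1')
        exact mul_le_mul_of_nonneg_left
          (hg _ (hLmem ha) _ (hLmem hmlt) (hLmono hm.1 hmlt)) hnn
      have hsum : ∑ m ∈ Finset.Ico a b, (Lfun l (m + 1) - Lfun l m) * g (Lfun l a)
          = (Lfun l b - Lfun l a) * g (Lfun l a) := by
        rw [← Finset.sum_mul, htel a b hab]
      rw [hsum] at hbound
      rw [hdiff] at hbound
      linarith
    · have hba' : b ≤ a := le_of_lt hba
      have hdiff : ∑ m ∈ Finset.Ico b a, (Lfun l (m + 1) - Lfun l m) * g (Lfun l m)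
          = Ffun g l a - Ffun g l b := by
        rw [Ffun, Ffun, Finset.sum_Ico_eq_sub _ hba']
      have hbound : ∑ m ∈ Finset.Ico b a, (Lfun l (m + 1) - Lfun l m) * g (Lfun l m)
          ≤ ∑ m ∈ Finset.Ico b a, (Lfun l (m + 1) - Lfun l m) * g (Lfun l a) := by
        apply Finset.sum_le_sum
        intro m hm
        rw [Finset.mem_Ico] at hm
        have hm1 : m + 1 ≤ a := hm.2
        have hm1' : m + 1 < l.length := lt_of_le_of_lt hm1 ha
        have hmlt : m < l.length := lt_of_lt_of_le (Nat.lt_succ_self m) (le_of_lt hm1')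
        have hnn : 0 ≤ Lfun l (m + 1) - Lfun l m :=
          sub_nonneg.2 (hLmono (Nat.le_succ m) hm1')
        exact mul_le_mul_of_nonneg_left
          (hg _ (hLmem hmlt) _ (hLmem ha) (hLmono (le_of_lt hm.2) ha)) hnn
      have hsum : ∑ m ∈ Finset.Ico b a, (Lfun l (m + 1) - Lfun l m) * g (Lfun l a)
          = (Lfun l a - Lfun l b) * g (Lfun l a) := by
        rw [← Finset.sum_mul, htel b a hba']
      rw [hsum] at hbound
      rw [hdiff] at hbound
      linarith
  refine ⟨fun t => Ffun g l (l.idxOf t), ?_⟩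
  intro r hr s hs
  have hrl : r ∈ l := (Finset.mem_sort (α := ℝ) (· ≤ ·)).2 hr
  have hsl : s ∈ l := (Finset.mem_sort (α := ℝ) (· ≤ ·)).2 hs
  have har : l.idxOf r < l.length := List.idxOf_lt_length_iff.2 hrl
  have has : l.idxOf s < l.length := List.idxOf_lt_length_iff.2 hsl
  have hLr : Lfun l (l.idxOf r) = r := by
    rw [Lfun, List.getD_eq_getElem _ _ har]; exact List.getElem_idxOf _
  have hLs : Lfun l (l.idxOf s) = s := by
    rw [Lfun, List.getD_eq_getElem _ _ has]; exact List.getElem_idxOf _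
  have := key _ _ har has
  rw [hLr, hLs] at this
  exact this

/-- Auxiliary: a chosen utility function for a (monotone) allocation `g` on `S`. -/
noncomputable def payAux (S : Finset ℝ) (g : ℝ → ℝ) : ℝ → ℝ :=
  if h : ∀ s ∈ S, ∀ s' ∈ S, s ≤ s' → g s ≤ g s' then
    (exists_convex_support S g h).choose else 0

lemma payAux_spec (S : Finset ℝ) (g : ℝ → ℝ)
    (h : ∀ s ∈ S, ∀ s' ∈ S, s ≤ s' → g s ≤ g s') :
    ∀ r ∈ S, ∀ s ∈ S, payAux S g r + (s - r) * g r ≤ payAux S g s := by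
  simp only [payAux, dif_pos h]
  exact (exists_convex_support S g h).choose_spec

/-- (a) Any IC auction has a monotone allocation rule; (b) conversely,
any monotone allocation rule admits payments making the auction IC. -/
theorem IC_iff_monotone_allocation
    (k : ℕ) (hk : 1 ≤ k)
    (V : Fin k → Finset ℝ) (hV : ∀ i, (V i).Nonempty)
    (hVnn : ∀ i, ∀ s ∈ V i, (0 : ℝ) ≤ s)
    (x : (Fin k → ℝ) → Fin k → ℝ)
    (hx01 : ∀ v ∈ profiles V, ∀ i, 0 ≤ x v i ∧ x v i ≤ 1) :
    (∀ p : (Fin k → ℝ) → Fin k → ℝ, IC V x p → MonotoneAlloc V x) ∧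
    (MonotoneAlloc V x → ∃ p : (Fin k → ℝ) → Fin k → ℝ, IC V x p) := by
  constructor
  · -- (a) IC implies monotone allocation
    intro p hic i v hv s hs s' hs' hss
    rcases eq_or_lt_of_le hss with rfl | hlt
    · exact le_refl _
    have hw : Function.update v i s ∈ profiles V := by
      rw [profiles, Fintype.mem_piFinset]
      intro j
      rcases eq_or_ne j i with rfl | hne
      · simpa using hs
      · simp only [Function.update_of_ne hne]
        exact (Fintype.mem_piFinset.1 hv) j
    have hw' : Function.update v i s' ∈ profiles V := by
      rw [profiles, Fintype.mem_piFinset]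
      intro j
      rcases eq_or_ne j i with rfl | hne
      · simpa using hs'
      · simp only [Function.update_of_ne hne]
        exact (Fintype.mem_piFinset.1 hv) j
    have h1 := hic (Function.update v i s) hw i s' hs'
    have h2 := hic (Function.update v i s') hw' i s hs
    rw [Function.update_idem] at h1 h2
    rw [Function.update_self] at h1 h2
    nlinarith [h1, h2, hlt]
  · -- (b) monotone allocation admits IC payments
    intro hmono
    classical
    refine ⟨fun v j => v j * x v j
      - payAux (V j) (fun t => x (Function.update v j t) j) (v j), ?_⟩
    intro v hv i r hr
    set g : ℝ → ℝ := fun t => x (Function.update v i t) i with hgdef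
    have hgm : ∀ s ∈ V i, ∀ s' ∈ V i, s ≤ s' → g s ≤ g s' :=
      fun s hs s' hs' h => hmono i v hv s hs s' hs' h
    have hvi : v i ∈ V i := (Fintype.mem_piFinset.1 hv) i
    have hgfun : (fun t => x (Function.update (Function.update v i r) i t) i) = g := by
      funext t; rw [Function.update_idem]
    have hkey := payAux_spec (V i) g hgm r hr (v i) hvi
    have hxv : x v i = g (v i) := by
      rw [hgdef]; simp [Function.update_eq_self]
    have hxr : x (Function.update v i r) i = g r := rfl
    simp only [hgfun, Function.update_self]
    rw [hxr, hxv]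
    linarith

end StaticAuction
end

section
/- If (x, p) is IC, then x is nondecreasing on [0, v̄] and the buyer's utility satisfies the envelope formula u(v) = u(0) + ∫_0^v x(s) ds for every v ∈ [0, v̄]. -/
open MeasureTheory intervalIntegral

/-!
Comparing the IC constraints of types `a` and `b` gives
`(b - a) x(a) ≤ u(b) - u(a) ≤ (b - a) x(b)`, which forces `x` to be monotone. Since `x` is monotone,
`∫_a^b x` obeys the same two bounds, so `F(v) = u(v) - ∫_0^v x` satisfies
`|F(t) - F(s)| ≤ (t - s) (x(t) - x(s))`. Summing over a uniform partition of `[0, v]` into `n`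
pieces telescopes to `|F(v) - F(0)| ≤ (v / n) (x(v) - x(0))`, and letting `n → ∞` gives `F(v) = F(0)`.
-/

open Set Filter Topology

section Telescoping

variable {F g : ℝ → ℝ} {a b : ℝ}

theorem abs_sub_le_div_mul_sub (hab : a ≤ b)
    (h : ∀ s ∈ Icc a b, ∀ t ∈ Icc a b, s ≤ t → |F t - F s| ≤ (t - s) * (g t - g s))
    {n : ℕ} (hn : n ≠ 0) :
    |F b - F a| ≤ (b - a) / n * (g b - g a) := by
  set δ := (b - a) / n
  set t : ℕ → ℝ := fun i => a + i * δ
  have hδ : 0 ≤ δ := div_nonneg (sub_nonneg.2 hab) n.cast_nonneg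
  have ht0 : t 0 = a := by simp [t]
  have htn : t n = b := by
    simp only [t, δ]
    field_simp
    ring
  have ht_mem : ∀ i ≤ n, t i ∈ Icc a b := fun i hi => by
    refine ⟨le_add_of_nonneg_right (by positivity), ?_⟩
    calc t i ≤ t n := by
          have : (i : ℝ) ≤ n := by exact_mod_cast hi
          simp only [t]
          gcongr
      _ = b := htn
  have ht_succ : ∀ i, t (i + 1) - t i = δ := fun i => by push_cast [t]; ring
  calc |F b - F a| = |∑ i ∈ Finset.range n, (F (t (i + 1)) - F (t i))| := by
        rw [Finset.sum_range_sub (fun i => F (t i)), ht0, htn]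
    _ ≤ ∑ i ∈ Finset.range n, |F (t (i + 1)) - F (t i)| := Finset.abs_sum_le_sum_abs _ _
    _ ≤ ∑ i ∈ Finset.range n, δ * (g (t (i + 1)) - g (t i)) := by
        refine Finset.sum_le_sum fun i hi => ?_
        have hi := Finset.mem_range.1 hi
        rw [← ht_succ i]
        exact h _ (ht_mem i hi.le) _ (ht_mem (i + 1) hi) (by linarith [ht_succ i])
    _ = δ * (g b - g a) := by
        rw [← Finset.mul_sum, Finset.sum_range_sub (fun i => g (t i)), ht0, htn]

theorem eq_of_forall_abs_sub_le_mul_sub (hab : a ≤ b)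
    (h : ∀ s ∈ Icc a b, ∀ t ∈ Icc a b, s ≤ t → |F t - F s| ≤ (t - s) * (g t - g s)) :
    F b = F a := by
  have hlim : Tendsto (fun n : ℕ => (b - a) / n * (g b - g a)) atTop (𝓝 0) := by
    simpa using (tendsto_const_div_atTop_nhds_zero_nat (b - a)).mul_const (g b - g a)
  have hbound : ∀ᶠ n : ℕ in atTop, |F b - F a| ≤ (b - a) / n * (g b - g a) :=
    (eventually_ne_atTop 0).mono fun n hn => abs_sub_le_div_mul_sub hab h hn
  exact sub_eq_zero.1 (abs_nonpos_iff.1 (ge_of_tendsto hlim hbound))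

end Telescoping

namespace MonotoneOn

variable {x : ℝ → ℝ} {a b : ℝ}

theorem mul_le_intervalIntegral (hx : MonotoneOn x (Icc a b)) (hab : a ≤ b) :
    (b - a) * x a ≤ ∫ s in a..b, x s := by
  have hint : IntervalIntegrable x volume a b := (uIcc_of_le hab ▸ hx).intervalIntegrable
  simpa using integral_mono_on hab intervalIntegrable_const hint
    fun s hs => hx (left_mem_Icc.2 hab) hs hs.1

theorem intervalIntegral_le_mul (hx : MonotoneOn x (Icc a b)) (hab : a ≤ b) :
    ∫ s in a..b, x s ≤ (b - a) * x b := by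
  have hint : IntervalIntegrable x volume a b := (uIcc_of_le hab ▸ hx).intervalIntegrable
  simpa using integral_mono_on hab hint intervalIntegrable_const
    fun s hs => hx hs (right_mem_Icc.2 hab) hs.2

end MonotoneOn

def utility (x p : ℝ → ℝ) (v : ℝ) : ℝ := v * x v - p v

def IsIncentiveCompatible (S : Set ℝ) (x p : ℝ → ℝ) : Prop :=
  ∀ v ∈ S, ∀ v' ∈ S, v * x v' - p v' ≤ utility x p v

namespace IsIncentiveCompatible

variable {S : Set ℝ} {x p : ℝ → ℝ} {a b : ℝ}

theorem sub_mul_le_utility_sub (hIC : IsIncentiveCompatible S x p) (ha : a ∈ S) (hb : b ∈ S) :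
    (b - a) * x a ≤ utility x p b - utility x p a := by
  have := hIC b hb a ha
  unfold utility at *
  linarith

theorem utility_sub_le_sub_mul (hIC : IsIncentiveCompatible S x p) (ha : a ∈ S) (hb : b ∈ S) :
    utility x p b - utility x p a ≤ (b - a) * x b := by
  have := hIC a ha b hb
  unfold utility at *
  linarith

theorem monotoneOn (hIC : IsIncentiveCompatible S x p) : MonotoneOn x S := by
  intro a ha b hb hab
  rcases hab.eq_or_lt with rfl | hlt
  · exact le_rfl
  · refine le_of_mul_le_mul_left ?_ (sub_pos.2 hlt)
    exact (hIC.sub_mul_le_utility_sub ha hb).trans (hIC.utility_sub_le_sub_mul ha hb)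

theorem utility_eq_add_integral (hIC : IsIncentiveCompatible (Icc a b) x p) {v : ℝ}
    (hv : v ∈ Icc a b) :
    utility x p v = utility x p a + ∫ s in a..v, x s := by
  have hmono := hIC.monotoneOn
  have hsub : Icc a v ⊆ Icc a b := Icc_subset_Icc_right hv.2
  have hint : ∀ t ∈ Icc a v, IntervalIntegrable x volume a t := fun t ht =>
    (uIcc_of_le ht.1 ▸ hmono.mono (Icc_subset_Icc_right (ht.2.trans hv.2))).intervalIntegrable
  suffices utility x p v - ∫ s in a..v, x s = utility x p a - ∫ s in a..a, x s by
    simp only [integral_same, sub_zero] at this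
    linarith
  refine eq_of_forall_abs_sub_le_mul_sub (F := fun t => utility x p t - ∫ s in a..t, x s) (g := x)
    hv.1 fun s hs t ht hst => ?_
  have hxst : MonotoneOn x (Icc s t) := hmono.mono ((Icc_subset_Icc hs.1 ht.2).trans hsub)
  have hsplit : (∫ r in a..t, x r) - ∫ r in a..s, x r = ∫ r in s..t, x r :=
    integral_interval_sub_left (hint t ht) (hint s hs)
  have hs' := hsub hs
  have ht' := hsub ht
  rw [abs_le]
  constructor
  · linarith [hIC.sub_mul_le_utility_sub hs' ht', hxst.intervalIntegral_le_mul hst]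
  · linarith [hIC.utility_sub_le_sub_mul hs' ht', hxst.mul_le_intervalIntegral hst]

end IsIncentiveCompatible

theorem IC_implies_monotone_and_envelope_general
    (vbar : ℝ)
    (x p : ℝ → ℝ)
    (hIC : ∀ v ∈ Set.Icc (0 : ℝ) vbar, ∀ v' ∈ Set.Icc (0 : ℝ) vbar,
      v * x v' - p v' ≤ v * x v - p v) :
    MonotoneOn x (Set.Icc (0 : ℝ) vbar) ∧
    ∀ v ∈ Set.Icc (0 : ℝ) vbar,
      v * x v - p v = ((0 : ℝ) * x 0 - p 0) + ∫ s in (0 : ℝ)..v, x s := by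
  have hIC' : IsIncentiveCompatible (Icc 0 vbar) x p := hIC
  exact ⟨hIC'.monotoneOn, fun v hv => hIC'.utility_eq_add_integral hv⟩

/-- For a single-buyer, single-item mechanism `(x, p)` on `[0, v̄]`,
incentive compatibility implies that the allocation rule `x` is nondecreasing on
`[0, v̄]` and that the buyer's utility `u(v) = v·x(v) − p(v)` satisfies the envelope
formula `u(v) = u(0) + ∫_0^v x(s) ds`. -/
theorem IC_implies_monotone_and_envelope
    (vbar : ℝ) (hvbar : 0 < vbar)
    (x p : ℝ → ℝ)
    (hx01 : ∀ v ∈ Set.Icc (0 : ℝ) vbar, x v ∈ Set.Icc (0 : ℝ) 1)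
    (hIC : ∀ v ∈ Set.Icc (0 : ℝ) vbar, ∀ v' ∈ Set.Icc (0 : ℝ) vbar,
      v * x v' - p v' ≤ v * x v - p v) :
    MonotoneOn x (Set.Icc (0 : ℝ) vbar) ∧
    ∀ v ∈ Set.Icc (0 : ℝ) vbar,
      v * x v - p v = ((0 : ℝ) * x 0 - p 0) + ∫ s in (0 : ℝ)..v, x s :=
  IC_implies_monotone_and_envelope_general vbar x p hIC
end

section
/- Let V be a nonempty finite subset of ℝ≥0, f a full-support probability mass function on V, F(s) = Σ_{s' ∈ V, s' ≤ s} f(s'), and for s ∈ V let pred(s) be the largest element of V strictly below s, or 0 if none exists. Then for every function x : V → ℝ: Σ_{v ∈ V} f(v)·(Σ_{s ∈ V, s ≤ v} x(s)·(s − pred(s))) = Σ_{s ∈ V} x(s)·(s − pred(s))·(1 − F(s) + f(s)). Equivalently, the expected envelope utility equals E[ϑ(v)·x(v)], where the discrete virtual value for utility is ϑ(s) = (s − pred(s))·(1 − F(s) + f(s))/f(s). -/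
/-! Exchanging the two sums, the term `x(s)·(s − pred s)` is weighted by the mass of the
upper set `{v ∈ V | s ≤ v}`, which is `1 − F(s) + f(s)` since the sets `{v ≥ s}` and
`{v ≤ s}` cover `V` and overlap exactly in `s`. -/

open Finset

namespace DiscreteVV

/-- The largest element of `V` strictly below `s`, or `0` if none exists. -/
noncomputable def predV (V : Finset ℝ) (s : ℝ) : ℝ :=
  ((V.filter fun s' => s' < s).max).unbotD 0

/-- The discrete CDF `F(s) = Σ_{s' ∈ V, s' ≤ s} f(s')`. -/
noncomputable def cdf (V : Finset ℝ) (f : ℝ → ℝ) (s : ℝ) : ℝ :=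
  ∑ s' ∈ V.filter (fun s' => s' ≤ s), f s'

section Summation

variable {α R : Type*} [LinearOrder α]

theorem sum_mul_sum_filter_le_comm [CommSemiring R] (V : Finset α) (f g : α → R) :
    ∑ v ∈ V, f v * ∑ s ∈ V.filter (· ≤ v), g s
      = ∑ s ∈ V, g s * ∑ v ∈ V.filter (s ≤ ·), f v := by
  simp_rw [mul_sum, sum_filter]
  rw [sum_comm]
  exact sum_congr rfl fun s _ => sum_congr rfl fun v _ => by rw [mul_comm]

theorem sum_filter_ge_eq_sub_add [AddCommGroup R] {V : Finset α} {s : α} (hs : s ∈ V)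
    (f : α → R) :
    ∑ v ∈ V.filter (s ≤ ·), f v = ∑ v ∈ V, f v - ∑ v ∈ V.filter (· ≤ s), f v + f s := by
  have hunion : V.filter (s ≤ ·) ∪ V.filter (· ≤ s) = V := by
    rw [← filter_or]
    exact filter_true_of_mem fun v _ => le_total s v
  have hinter : V.filter (s ≤ ·) ∩ V.filter (· ≤ s) = {s} := by
    rw [← filter_and]
    ext v
    simp only [mem_filter, mem_singleton, ← le_antisymm_iff, eq_comm (a := s)]
    exact ⟨And.right, fun h => ⟨h ▸ hs, h⟩⟩
  have inclusion_exclusion :=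
    sum_union_inter (s₁ := V.filter (s ≤ ·)) (s₂ := V.filter (· ≤ s)) (f := f)
  rw [hunion, hinter, sum_singleton] at inclusion_exclusion
  rw [sub_add_eq_add_sub, inclusion_exclusion, add_sub_cancel_right]

end Summation

theorem expected_envelope_utility_discrete_general
    (V : Finset ℝ)
    (f : ℝ → ℝ) (hf : ∀ s ∈ V, 0 < f s) (hsum : ∑ s ∈ V, f s = 1)
    (x : ℝ → ℝ) :
    (∑ v ∈ V, f v * ∑ s ∈ V.filter (fun s => s ≤ v), x s * (s - predV V s))
        = (∑ s ∈ V, x s * (s - predV V s) * (1 - cdf V f s + f s)) ∧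
    (∑ v ∈ V, f v * ∑ s ∈ V.filter (fun s => s ≤ v), x s * (s - predV V s))
        = ∑ v ∈ V, f v * ((v - predV V v) * (1 - cdf V f v + f v) / f v * x v) := by
  have envelope : (∑ v ∈ V, f v * ∑ s ∈ V.filter (fun s => s ≤ v), x s * (s - predV V s))
      = ∑ s ∈ V, x s * (s - predV V s) * (1 - cdf V f s + f s) := by
    rw [sum_mul_sum_filter_le_comm]
    refine sum_congr rfl fun s hs => ?_
    rw [sum_filter_ge_eq_sub_add hs, hsum, cdf]
  refine ⟨envelope, envelope.trans (sum_congr rfl fun v hv => ?_)⟩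
  field_simp [(hf v hv).ne']

/-- For a finite value space `V ⊆ ℝ≥0` with full-support pmf `f` and
any `x : V → ℝ`, the expected envelope utility equals
`Σ_{s} x(s)·(s − pred(s))·(1 − F(s) + f(s))`; equivalently, it equals `E[ϑ(v)·x(v)]`
with the discrete virtual value for utility
`ϑ(s) = (s − pred(s))·(1 − F(s) + f(s))/f(s)`. -/
theorem expected_envelope_utility_discrete
    (V : Finset ℝ) (hV : V.Nonempty) (hVnn : ∀ s ∈ V, (0 : ℝ) ≤ s)
    (f : ℝ → ℝ) (hf : ∀ s ∈ V, 0 < f s) (hsum : ∑ s ∈ V, f s = 1)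
    (x : ℝ → ℝ) :
    (∑ v ∈ V, f v * ∑ s ∈ V.filter (fun s => s ≤ v), x s * (s - predV V s))
        = (∑ s ∈ V, x s * (s - predV V s) * (1 - cdf V f s + f s)) ∧
    (∑ v ∈ V, f v * ∑ s ∈ V.filter (fun s => s ≤ v), x s * (s - predV V s))
        = ∑ v ∈ V, f v * ((v - predV V v) * (1 - cdf V f v + f v) / f v * x v) :=
  expected_envelope_utility_discrete_general V f hf hsum x

end DiscreteVV
end
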